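/- arXiv:2605.21152 — 6 statements merged into one kernel-verified Lean document; each statement's English description precedes it below -/
import Mathlib

section
/- Let 0<q<p be coprime integers with p/q=[a_1,...,a_n], a_i≥2, and let A be the associated tridiagonal matrix with diagonal -a_i and off-diagonals 1. Let A_1 be A with its first column replaced by the vector w=(a_1-2,...,a_n-2)^T. Then det A_1 = (-1)^{n+1}(p - q - 1). -/
/-!
Expanding along the first row gives the continuant recursion
`K(a₁, …, aₙ) = a₁ K(a₂, …, aₙ) - K(a₃, …, aₙ)` for `(-1)ⁿ det A`, and for `D(a₁, …, aₙ) = det A₁`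
the recursion `D(a₁, …, aₙ) = (a₁ - 2) (-1)ⁿ⁻¹ K(a₂, …, aₙ) - D(a₂, …, aₙ)`, solved by
`(-1)ⁿ⁺¹ (K(a₁, …, aₙ) - K(a₂, …, aₙ) - 1)`. The two continuants are coprime, and
`[a₁, …, aₙ] = K(a₁, …, aₙ) / K(a₂, …, aₙ)` with positive denominator, so they are `p` and `q`.
-/

/-- Hirzebruch–Jung (negative-regular) continued fraction
`[a₁,...,aₙ] = a₁ - 1/(a₂ - 1/(⋯ - 1/aₙ))`. -/
def hjCF : List ℚ → ℚ
  | [] => 0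
  | [a] => a
  | a :: b :: l => a - 1 / hjCF (b :: l)

/-- The tridiagonal matrix with diagonal `-a₁,...,-aₙ` and off-diagonal entries `1`. -/
def tridiag {n : ℕ} (a : Fin n → ℤ) : Matrix (Fin n) (Fin n) ℚ :=
  Matrix.of fun i j =>
    if i = j then -(a i : ℚ)
    else if (i : ℕ) + 1 = (j : ℕ) ∨ (j : ℕ) + 1 = (i : ℕ) then 1 else 0

/-- The pair of continuants `(K(a₁, …, aₙ), K(a₂, …, aₙ))`. -/
def hjContinuants : List ℤ → ℤ × ℤ
  | [] => (1, 0)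
  | a :: l => (a * (hjContinuants l).1 - (hjContinuants l).2, (hjContinuants l).1)

namespace hjContinuants

theorem snd_nonneg_and_lt_fst : ∀ l : List ℤ, (∀ x ∈ l, 2 ≤ x) →
    0 ≤ (hjContinuants l).2 ∧ (hjContinuants l).2 < (hjContinuants l).1
  | [], _ => by simp [hjContinuants]
  | a :: l, h => by
    obtain ⟨hQ, hQP⟩ := snd_nonneg_and_lt_fst l fun x hx => h x (List.mem_cons_of_mem _ hx)
    have ha : 2 ≤ a := h a List.mem_cons_self
    simp only [hjContinuants]
    constructor <;> nlinarith

theorem snd_pos {l : List ℤ} (hl : l ≠ []) (h : ∀ x ∈ l, 2 ≤ x) : 0 < (hjContinuants l).2 := by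
  obtain ⟨a, l, rfl⟩ := List.exists_cons_of_ne_nil hl
  obtain ⟨hQ, hQP⟩ := snd_nonneg_and_lt_fst l fun x hx => h x (List.mem_cons_of_mem _ hx)
  exact hQ.trans_lt hQP

theorem isCoprime : ∀ l : List ℤ, IsCoprime (hjContinuants l).1 (hjContinuants l).2
  | [] => isCoprime_one_left
  | a :: l => by
    have ih := isCoprime l
    simp only [hjContinuants]
    rw [sub_eq_neg_add, mul_comm, IsCoprime.add_mul_left_left_iff, IsCoprime.neg_left_iff]
    exact ih.symm

end hjContinuants

theorem hjCF_map_intCast {l : List ℤ} (hl : l ≠ []) (h : ∀ x ∈ l, 2 ≤ x) :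
    hjCF (l.map (Int.cast : ℤ → ℚ)) = (hjContinuants l).1 / (hjContinuants l).2 := by
  obtain ⟨a, l, rfl⟩ := List.exists_cons_of_ne_nil hl
  clear hl
  induction l generalizing a with
  | nil => simp [hjCF, hjContinuants]
  | cons b l ih =>
    have htail : ∀ x ∈ b :: l, 2 ≤ x := fun x hx => h x (List.mem_cons_of_mem _ hx)
    obtain ⟨hQ, hQP⟩ := hjContinuants.snd_nonneg_and_lt_fst (b :: l) htail
    have hP : ((hjContinuants (b :: l)).1 : ℚ) ≠ 0 := by exact_mod_cast (hQ.trans_lt hQP).ne'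
    have hQ' : ((hjContinuants (b :: l)).2 : ℚ) ≠ 0 := by
      exact_mod_cast (hjContinuants.snd_pos (List.cons_ne_nil _ _) htail).ne'
    rw [List.map_cons, List.map_cons, hjCF, ← List.map_cons, ih _ htail]
    simp only [hjContinuants] at hP hQ' ⊢
    push_cast at hP ⊢
    field_simp

open Matrix

section Laplace

variable {R : Type*} [CommRing R] {n : ℕ}

theorem Matrix.det_updateCol_zero_single_zero (M : Matrix (Fin (n + 1)) (Fin (n + 1)) R) :
    (M.updateCol 0 (Pi.single 0 1)).det = (M.submatrix Fin.succ Fin.succ).det := by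
  rw [← det_transpose, ← updateRow_transpose, ← adjugate_apply, adjugate_fin_succ_eq_det_submatrix,
    Fin.succAbove_zero, ← transpose_submatrix, det_transpose]
  simp

omit [CommRing R] in
theorem Matrix.updateCol_zero_submatrix_succ_succAbove_one
    (M : Matrix (Fin (n + 2)) (Fin (n + 2)) R) (c : Fin (n + 2) → R) :
    (M.updateCol 0 c).submatrix Fin.succ (Fin.succAbove 1)
      = (M.submatrix Fin.succ Fin.succ).updateCol 0 (c ∘ Fin.succ) := by
  ext i j
  cases j using Fin.cases with
  | zero => simp
  | succ k =>
    have : (1 : Fin (n + 2)).succAbove k.succ = k.succ.succ :=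
      Fin.succAbove_of_le_castSucc _ _ (Fin.le_castSucc_iff.mpr (Fin.one_lt_succ_succ k))
    simp [this]

theorem Matrix.det_updateCol_zero_of_row_zero_eq_zero
    (M : Matrix (Fin (n + 2)) (Fin (n + 2)) R) (c : Fin (n + 2) → R)
    (hM : ∀ j : Fin n, M 0 j.succ.succ = 0) :
    (M.updateCol 0 c).det = c 0 * (M.submatrix Fin.succ Fin.succ).det
      - M 0 1 * ((M.submatrix Fin.succ Fin.succ).updateCol 0 (c ∘ Fin.succ)).det := by
  have hminor : (M.updateCol 0 c).submatrix Fin.succ Fin.succ = M.submatrix Fin.succ Fin.succ := by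
    simpa using submatrix_updateCol_succAbove M c Fin.succ 0
  rw [det_succ_row_zero, Fin.sum_univ_succ, Fin.sum_univ_succ, Finset.sum_eq_zero]
  · rw [Fin.succAbove_zero, hminor, Fin.succ_zero_eq_one,
      updateCol_zero_submatrix_succ_succAbove_one, updateCol_self, updateCol_ne one_ne_zero,
      Fin.val_zero, Fin.val_one]
    ring
  · intro j _
    simp [updateCol_ne, hM]

end Laplace

section Tridiag

variable {n : ℕ}

theorem tridiag_zero_zero (a : Fin (n + 1) → ℤ) : tridiag a 0 0 = -(a 0 : ℚ) := by
  simp [tridiag]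

theorem tridiag_zero_one (a : Fin (n + 2) → ℤ) : tridiag a 0 1 = 1 := by
  simp [tridiag]

theorem tridiag_zero_succ_succ (a : Fin (n + 2) → ℤ) (j : Fin n) : tridiag a 0 j.succ.succ = 0 := by
  simp [tridiag, (Fin.succ_ne_zero _).symm]

theorem tridiag_succ_zero (a : Fin (n + 2) → ℤ) (i : Fin (n + 1)) :
    tridiag a i.succ 0 = (Pi.single 0 1 : Fin (n + 1) → ℚ) i := by
  cases i using Fin.cases with
  | zero => simp [tridiag]
  | succ k => simp [tridiag, Fin.succ_ne_zero]

theorem tridiag_submatrix_succ (a : Fin (n + 1) → ℤ) :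
    (tridiag a).submatrix Fin.succ Fin.succ = tridiag (a ∘ Fin.succ) := by
  ext i j
  simp [tridiag]

theorem det_updateCol_zero_tridiag (a : Fin (n + 2) → ℤ) (c : Fin (n + 2) → ℚ) :
    ((tridiag a).updateCol 0 c).det
      = c 0 * (tridiag (a ∘ Fin.succ)).det
        - ((tridiag (a ∘ Fin.succ)).updateCol 0 (c ∘ Fin.succ)).det := by
  rw [det_updateCol_zero_of_row_zero_eq_zero _ _ (tridiag_zero_succ_succ a), tridiag_zero_one,
    tridiag_submatrix_succ, one_mul]

theorem det_tridiag : ∀ {n : ℕ} (a : Fin n → ℤ),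
    (tridiag a).det = (-1) ^ n * (hjContinuants (List.ofFn a)).1
  | 0, a => by simp [hjContinuants]
  | 1, a => by simp [tridiag_zero_zero, hjContinuants]
  | n + 2, a => by
    have hcol : (fun i => tridiag a i 0) ∘ Fin.succ = Pi.single 0 1 := funext (tridiag_succ_zero a)
    rw [← updateCol_eq_self (tridiag a) 0, det_updateCol_zero_tridiag, hcol,
      det_updateCol_zero_single_zero, tridiag_submatrix_succ, det_tridiag, det_tridiag,
      tridiag_zero_zero]
    simp only [List.ofFn_succ, hjContinuants, Function.comp_def]
    push_cast
    ring

theorem det_updateCol_zero_tridiag_sub_two : ∀ {n : ℕ} (a : Fin (n + 1) → ℤ),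
    ((tridiag a).updateCol 0 (fun i => (a i : ℚ) - 2)).det
      = (-1) ^ n * ((hjContinuants (List.ofFn a)).1 - (hjContinuants (List.ofFn a)).2 - 1)
  | 0, a => by
    rw [det_fin_one, updateCol_self]
    simp only [List.ofFn_succ, List.ofFn_zero, hjContinuants]
    push_cast
    ring
  | n + 1, a => by
    rw [det_updateCol_zero_tridiag, det_tridiag,
      show (fun i => (a i : ℚ) - 2) ∘ Fin.succ = fun i => ((a ∘ Fin.succ) i : ℚ) - 2 from rfl,
      det_updateCol_zero_tridiag_sub_two]
    simp only [List.ofFn_succ, hjContinuants, Function.comp_apply]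
    push_cast
    ring

end Tridiag

theorem det_tridiag_first_col_replaced_general (p q : ℤ) (hq : 0 < q)
    (hcop : Int.gcd p q = 1)
    (n : ℕ) (hn : 0 < n) (a : Fin n → ℤ) (ha : ∀ i, 2 ≤ a i)
    (hhj : hjCF (List.ofFn fun i => ((a i : ℚ))) = (p : ℚ) / q) :
    ((tridiag a).updateCol ⟨0, hn⟩ (fun i => (a i : ℚ) - 2)).det
      = (-1 : ℚ) ^ (n + 1) * (p - q - 1) := by
  obtain ⟨m, rfl⟩ : ∃ m, n = m + 1 := ⟨n - 1, by omega⟩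
  have hne : List.ofFn a ≠ [] := by simp
  have hge : ∀ x ∈ List.ofFn a, 2 ≤ x := List.forall_mem_ofFn_iff.mpr ha
  have hval := hjCF_map_intCast hne hge
  rw [List.map_ofFn, Function.comp_def, hhj] at hval
  obtain ⟨rfl, rfl⟩ := Rat.div_int_inj hq (hjContinuants.snd_pos hne hge) hcop
    (Int.isCoprime_iff_gcd_eq_one.mp (hjContinuants.isCoprime _)) hval
  rw [Fin.mk_zero, det_updateCol_zero_tridiag_sub_two, pow_succ]
  ring

theorem det_tridiag_first_col_replaced (p q : ℤ) (hq : 0 < q) (hqp : q < p)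
    (hcop : Int.gcd p q = 1)
    (n : ℕ) (hn : 0 < n) (a : Fin n → ℤ) (ha : ∀ i, 2 ≤ a i)
    (hhj : hjCF (List.ofFn fun i => ((a i : ℚ))) = (p : ℚ) / q) :
    ((tridiag a).updateCol ⟨0, hn⟩ (fun i => (a i : ℚ) - 2)).det
      = (-1 : ℚ) ^ (n + 1) * (p - q - 1) :=
  det_tridiag_first_col_replaced_general p q hq hcop n hn a ha hhj
end

section
/- Let 0<q<p be coprime with p/q=[a_1,...,a_n], a_i≥2. Let A be the associated tridiagonal matrix (diagonal -a_i, off-diagonals 1), w=(a_1-2,...,a_n-2)^T, and u=(1,0,...,0)^T. Then u^T A^{-1} w = (q+1-p)/p. -/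
lemma hjCF_cons (x : ℚ) (l : List ℚ) : hjCF (x :: l) = x - 1 / hjCF l := by
  cases l <;> simp [hjCF]

/-- The continuant `K(aₖ, …, aₙ₋₁)`, i.e. the numerator of `[aₖ, …, aₙ₋₁]`. -/
def tailContinuant {n : ℕ} (a : Fin n → ℤ) (k : ℕ) : ℤ :=
  if h : k < n then a ⟨k, h⟩ * tailContinuant a (k + 1) - tailContinuant a (k + 2)
  else if k = n then 1 else 0
termination_by n + 1 - k

section tailContinuant

variable {n : ℕ} (a : Fin n → ℤ)

lemma tailContinuant_self : tailContinuant a n = 1 := by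
  rw [tailContinuant]; simp

lemma tailContinuant_succ_self : tailContinuant a (n + 1) = 0 := by
  rw [tailContinuant]; simp

lemma tailContinuant_rec (i : Fin n) :
    tailContinuant a i = a i * tailContinuant a (i + 1) - tailContinuant a (i + 2) := by
  rw [tailContinuant, dif_pos i.isLt]

variable {a}

lemma tailContinuant_succ_lt (ha : ∀ i, 2 ≤ a i) {k : ℕ} (hk : k ≤ n) :
    0 ≤ tailContinuant a (k + 1) ∧ tailContinuant a (k + 1) < tailContinuant a k := by
  induction hk using Nat.decreasingInduction with
  | self => simp [tailContinuant_self, tailContinuant_succ_self]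
  | of_succ k hk ih =>
    have hrec := tailContinuant_rec a ⟨k, hk⟩
    have hak := ha ⟨k, hk⟩
    dsimp only at hrec
    refine ⟨by omega, ?_⟩
    nlinarith

lemma tailContinuant_pos (ha : ∀ i, 2 ≤ a i) {k : ℕ} (hk : k ≤ n) : 0 < tailContinuant a k := by
  have := tailContinuant_succ_lt ha hk
  omega

lemma isCoprime_tailContinuant {k : ℕ} (hk : k ≤ n) :
    IsCoprime (tailContinuant a k) (tailContinuant a (k + 1)) := by
  induction hk using Nat.decreasingInduction with
  | self => simp [tailContinuant_self, isCoprime_one_left]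
  | of_succ k hk ih =>
    rw [tailContinuant_rec a ⟨k, hk⟩, sub_eq_neg_add]
    exact ih.symm.neg_left.add_mul_right_left _

lemma hjCF_drop_ofFn (ha : ∀ i, 2 ≤ a i) {k : ℕ} (hk : k ≤ n) :
    hjCF ((List.ofFn fun i => (a i : ℚ)).drop k)
      = tailContinuant a k / tailContinuant a (k + 1) := by
  induction hk using Nat.decreasingInduction with
  -- at `k = n` both sides are junk zeros: `hjCF [] = 0` and `1 / 0 = 0`
  | self => simp [tailContinuant_succ_self, List.drop_of_length_le, hjCF]
  | of_succ k hk ih =>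
    have hpos : (0 : ℚ) < tailContinuant a (k + 1) := by
      exact_mod_cast tailContinuant_pos ha hk
    rw [List.drop_eq_getElem_cons (by simpa using hk), hjCF_cons, ih, List.getElem_ofFn,
      tailContinuant_rec a ⟨k, hk⟩]
    push_cast
    field_simp

end tailContinuant

open Matrix

section tridiag

variable {n : ℕ}

lemma tridiag_apply (a : Fin n → ℤ) (i j : Fin n) :
    tridiag a i j = (if (j : ℕ) = i then -(a i : ℚ) else 0) + (if (j : ℕ) = i + 1 then 1 else 0)
      + (if (j : ℕ) + 1 = i then 1 else 0) := by
  simp only [tridiag, of_apply, Fin.ext_iff]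
  split_ifs <;> first | omega | simp_all

lemma tridiag_mulVec_apply (a : Fin n → ℤ) (z : ℕ → ℚ) (i : Fin n) :
    (tridiag a *ᵥ fun j => z (j + 1)) i = (if (i : ℕ) = 0 then 0 else z i)
      - a i * z (i + 1) + (if (i : ℕ) + 1 = n then 0 else z (i + 2)) := by
  simp only [mulVec, dotProduct, tridiag_apply, add_mul, ite_mul, zero_mul, one_mul,
    Finset.sum_add_distrib]
  rw [Fin.sum_univ_eq_sum_range (fun m => if m = (i : ℕ) then -(a i : ℚ) * z (m + 1) else 0),
    Fin.sum_univ_eq_sum_range (fun m => if m = (i : ℕ) + 1 then z (m + 1) else 0),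
    Fin.sum_univ_eq_sum_range (fun m => if m + 1 = (i : ℕ) then z (m + 1) else 0),
    Finset.sum_ite_eq', Finset.sum_ite_eq']
  obtain ⟨_ | k, hi⟩ := i <;> simp [hi] <;> split_ifs <;> first | omega | ring

lemma tridiag_transpose (a : Fin n → ℤ) : (tridiag a)ᵀ = tridiag a := by
  ext i j
  simp only [transpose_apply, tridiag, of_apply, eq_comm (a := i), or_comm]
  split_ifs with h <;> simp [h]

lemma dotProduct_tridiag_mulVec (a : Fin n → ℤ) (v w : Fin n → ℚ) :
    v ⬝ᵥ (tridiag a *ᵥ w) = (tridiag a *ᵥ v) ⬝ᵥ w := by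
  rw [dotProduct_mulVec, ← vecMul_transpose, tridiag_transpose]

lemma tridiag_mulVec_tailContinuant (hn : 0 < n) (a : Fin n → ℤ) :
    tridiag a *ᵥ (fun j => (tailContinuant a (j + 1) : ℚ))
      = Pi.single ⟨0, hn⟩ (-(tailContinuant a 0 : ℚ)) := by
  ext i
  rw [tridiag_mulVec_apply a (fun k => (tailContinuant a k : ℚ))]
  simp only [Pi.single_apply, Fin.ext_iff]
  have hrec : (tailContinuant a i : ℚ)
      = a i * tailContinuant a (i + 1) - tailContinuant a (i + 2) := by
    exact_mod_cast tailContinuant_rec a i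
  have hlast (hl : (i : ℕ) + 1 = n) : (tailContinuant a (i + 2) : ℚ) = 0 := by
    rw [show (i : ℕ) + 2 = n + 1 by omega, tailContinuant_succ_self, Int.cast_zero]
  split_ifs with h0 hl hl
  · rw [← h0, hrec, hlast hl]; ring
  · rw [← h0, hrec]; ring
  · rw [hrec, hlast hl]; ring
  · rw [hrec]; ring

lemma tridiag_mulVec_one (hn : 0 < n) (a : Fin n → ℤ) :
    tridiag a *ᵥ 1
      = -(fun i => (a i : ℚ) - 2) - Pi.single ⟨0, hn⟩ 1 - Pi.single ⟨n - 1, by omega⟩ 1 := by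
  ext i
  rw [show (1 : Fin n → ℚ) = fun j : Fin n => (fun _ : ℕ => (1 : ℚ)) (j + 1) from rfl,
    tridiag_mulVec_apply a (fun _ => 1)]
  simp only [Pi.sub_apply, Pi.neg_apply, Pi.single_apply, Fin.ext_iff]
  split_ifs <;> first | omega | ring

lemma eq_mul_tailContinuant_of_rec {a : Fin n → ℤ} {z : ℕ → ℚ}
    (hrec : ∀ i : Fin n, z i = a i * z (i + 1) - z (i + 2)) (htop : z (n + 1) = 0)
    {k : ℕ} (hk : k ≤ n) : z k = z n * tailContinuant a k := by
  suffices z k = z n * tailContinuant a k ∧ z (k + 1) = z n * tailContinuant a (k + 1) from this.1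
  induction hk using Nat.decreasingInduction with
  | self => simp [tailContinuant_self, tailContinuant_succ_self, htop]
  | of_succ k hk ih =>
    refine ⟨?_, ih.1⟩
    rw [hrec ⟨k, hk⟩, tailContinuant_rec a ⟨k, hk⟩]
    dsimp only
    rw [ih.1, ih.2]
    push_cast
    ring

lemma eq_zero_of_tridiag_mulVec_eq_zero {a : Fin n → ℤ} (ha : ∀ i, 2 ≤ a i) {v : Fin n → ℚ}
    (hv : tridiag a *ᵥ v = 0) : v = 0 := by
  set z : ℕ → ℚ := fun k => if h : 0 < k ∧ k ≤ n then v ⟨k - 1, by omega⟩ else 0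
  have hz : ∀ j : Fin n, z (j + 1) = v j := fun j => by simp [z, Nat.succ_le_of_lt j.isLt]
  have hz0 : z 0 = 0 := by simp [z]
  have hztop : z (n + 1) = 0 := by simp [z]
  have hrec (i : Fin n) : z i = a i * z (i + 1) - z (i + 2) := by
    have hrow := congrFun hv i
    rw [show v = fun j : Fin n => z (j + 1) from funext fun j => (hz j).symm,
      tridiag_mulVec_apply] at hrow
    have e0 : (if (i : ℕ) = 0 then 0 else z i) = z i := by split_ifs with h <;> simp [h, hz0]
    have e1 : (if (i : ℕ) + 1 = n then 0 else z (i + 2)) = z (i + 2) := by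
      split_ifs with h
      · rw [show (i : ℕ) + 2 = n + 1 by omega, hztop]
      · rfl
    rw [e0, e1, Pi.zero_apply] at hrow
    linarith
  have hzn : z n = 0 := by
    have h0 := eq_mul_tailContinuant_of_rec hrec hztop (Nat.zero_le n)
    have : (tailContinuant a 0 : ℚ) ≠ 0 := by
      exact_mod_cast (tailContinuant_pos ha (Nat.zero_le n)).ne'
    simpa [z, this] using h0
  ext j
  rw [← hz, eq_mul_tailContinuant_of_rec hrec hztop j.isLt, hzn, zero_mul, Pi.zero_apply]

lemma isUnit_det_tridiag {a : Fin n → ℤ} (ha : ∀ i, 2 ≤ a i) : IsUnit (tridiag a).det := by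
  rw [← isUnit_iff_isUnit_det, ← mulVec_injective_iff_isUnit]
  intro v w h
  rw [← sub_eq_zero]
  exact eq_zero_of_tridiag_mulVec_eq_zero ha (by rw [mulVec_sub, h, sub_self])

lemma tailContinuant_dotProduct_sub_two (hn : 0 < n) (a : Fin n → ℤ) :
    (fun j : Fin n => (tailContinuant a (j + 1) : ℚ)) ⬝ᵥ (fun i => (a i : ℚ) - 2)
      = tailContinuant a 0 - tailContinuant a 1 - 1 := by
  have hw : (fun i => (a i : ℚ) - 2)
      = -(tridiag a *ᵥ 1) - Pi.single ⟨0, hn⟩ 1 - Pi.single ⟨n - 1, by omega⟩ 1 := by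
    rw [tridiag_mulVec_one hn]; abel
  rw [hw, dotProduct_sub, dotProduct_sub, dotProduct_neg, dotProduct_tridiag_mulVec,
    tridiag_mulVec_tailContinuant hn, single_dotProduct, dotProduct_single, dotProduct_single]
  simp [Nat.sub_add_cancel hn, tailContinuant_self]

end tridiag

theorem uT_inv_w_general (p q : ℤ) (hq : 0 < q) (hcop : Int.gcd p q = 1)
    (n : ℕ) (hn : 0 < n) (a : Fin n → ℤ) (ha : ∀ i, 2 ≤ a i)
    (hhj : hjCF (List.ofFn fun i => ((a i : ℚ))) = (p : ℚ) / q) :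
    ((tridiag a)⁻¹.mulVec (fun i => (a i : ℚ) - 2)) ⟨0, hn⟩
      = ((q : ℚ) + 1 - p) / p := by
  obtain ⟨rfl, rfl⟩ : p = tailContinuant a 0 ∧ q = tailContinuant a 1 :=
    Rat.div_int_inj hq (tailContinuant_pos ha hn) hcop
      (Int.isCoprime_iff_gcd_eq_one.mp (isCoprime_tailContinuant (Nat.zero_le n)))
      (hhj.symm.trans (by simpa using hjCF_drop_ofFn ha (Nat.zero_le n)))
  have hsolve :
      tridiag a *ᵥ ((tridiag a)⁻¹ *ᵥ fun i => (a i : ℚ) - 2) = fun i => (a i : ℚ) - 2 := by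
    rw [mulVec_mulVec, mul_nonsing_inv _ (isUnit_det_tridiag ha), one_mulVec]
  have hpair := congrArg ((fun j : Fin n => (tailContinuant a (j + 1) : ℚ)) ⬝ᵥ ·) hsolve
  rw [dotProduct_tridiag_mulVec, tridiag_mulVec_tailContinuant hn, single_dotProduct,
    tailContinuant_dotProduct_sub_two hn] at hpair
  have hp : (tailContinuant a 0 : ℚ) ≠ 0 := by
    exact_mod_cast (tailContinuant_pos ha (Nat.zero_le n)).ne'
  field_simp
  linarith

theorem uT_inv_w (p q : ℤ) (hq : 0 < q) (hqp : q < p) (hcop : Int.gcd p q = 1)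
    (n : ℕ) (hn : 0 < n) (a : Fin n → ℤ) (ha : ∀ i, 2 ≤ a i)
    (hhj : hjCF (List.ofFn fun i => ((a i : ℚ))) = (p : ℚ) / q) :
    ((tridiag a)⁻¹.mulVec (fun i => (a i : ℚ) - 2)) ⟨0, hn⟩
      = ((q : ℚ) + 1 - p) / p :=
  uT_inv_w_general p q hq hcop n hn a ha hhj
end

section
/- Let 0<q<p be coprime with p/q=[a_1,...,a_n], a_i≥2, q* the inverse of q mod p (0<q*<p), and s(q,p) the Dedekind sum. Then 12 s(q,p) = Σ_{j=1}^n (a_j - 3) + (q+q*)/p. -/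
/-- The sawtooth function `((x))`. -/
def saw (x : ℚ) : ℚ := if x.den = 1 then 0 else x - ⌊x⌋ - 1 / 2

/-- The classical Dedekind sum `s(q,p) = Σ_{i=1}^{p-1} ((i/p))((iq/p))`. -/
noncomputable def dedekindSum (q p : ℤ) : ℚ :=
  ∑ i ∈ Finset.Ico (1 : ℤ) p, saw ((i : ℚ) / (p : ℚ)) * saw ((i : ℚ) * (q : ℚ) / (p : ℚ))

/-!
Put `φ(q, p) = 12 s(q, p) - (q + q*) / p`. If `p / q = [a₁, a₂, …, aₙ]`, then
`q / q' = [a₂, …, aₙ]` for `q' = a₁ q - p ≡ -p (mod q)`, and `q'* = (q q* - 1) / p` is the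
inverse of `q'` modulo `q`. Since `s(·, q)` is odd and `q`-periodic, `s(q', q) = -s(p, q)`, so
Dedekind reciprocity `12 p q (s(q, p) + s(p, q)) = p² + q² + 1 - 3 p q` turns into
`φ(q, p) = (a₁ - 3) + φ(q', q)`. For `n = 1` we have `q = q* = 1`, and reciprocity with `q = 1`
gives `φ(1, p) = p - 3`.

Reciprocity reduces to the weighted floor sums `U(q, p) = Σ i ⌊iq/p⌋`, since `12 p s(q, p)` is
a polynomial in `p, q` minus `12 U(q, p)`. Two facts link `U(q, p)` and `U(p, q)`:
`i ↦ iq mod p` permutes `1, …, p - 1`, so `Σ (iq - p ⌊iq/p⌋)² = Σ i²`; and counting the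
lattice points `(i, j)` with `jp < iq` with weight `2j - 1` gives
`Σ ⌊iq/p⌋² = Σ_j (2j - 1)(p - 1 - ⌊jp/q⌋)`.
-/

open Finset

theorem Int.sum_Ico_eq_sub_of_eq_sub {M : Type*} [AddCommGroup M] {f F : ℤ → M}
    (hf : ∀ n, f n = F (n + 1) - F n) {a b : ℤ} (hab : a ≤ b) :
    ∑ n ∈ Ico a b, f n = F b - F a := by
  induction b, hab using Int.leInduction with
  | base => simp
  | succ b hab ih =>
    rw [← insert_Ico_right_eq_Ico_add_one hab, sum_insert (by simp), ih, hf]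
    abel

theorem two_mul_sum_Ico_intCast {R : Type*} [CommRing R] {p : ℤ} (hp : 0 < p) :
    2 * ∑ i ∈ Ico 1 p, (i : R) = p * (p - 1) := by
  rw [mul_sum, Int.sum_Ico_eq_sub_of_eq_sub (F := fun n => (n : R) * (n - 1))
    (fun n => by push_cast; ring) (by omega : (1 : ℤ) ≤ p)]
  push_cast
  ring

theorem six_mul_sum_Ico_intCast_sq {R : Type*} [CommRing R] {p : ℤ} (hp : 0 < p) :
    6 * ∑ i ∈ Ico 1 p, (i : R) ^ 2 = (p - 1) * p * (2 * p - 1) := by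
  rw [mul_sum, Int.sum_Ico_eq_sub_of_eq_sub (F := fun n => ((n : R) - 1) * n * (2 * n - 1))
    (fun n => by push_cast; ring) (by omega : (1 : ℤ) ≤ p)]
  push_cast
  ring

theorem sum_Ico_two_mul_sub_one {m : ℤ} (hm : 0 ≤ m) :
    ∑ j ∈ Ico 1 (m + 1), (2 * j - 1) = m ^ 2 := by
  rw [Int.sum_Ico_eq_sub_of_eq_sub (F := fun n => (n - 1) ^ 2) (fun n => by ring) (by omega)]
  ring

theorem saw_eq_fract_sub {x : ℚ} (hx : x.den ≠ 1) : saw x = Int.fract x - 1 / 2 := by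
  rw [saw, if_neg hx, Int.fract]

theorem fract_ne_zero_of_den_ne_one {x : ℚ} (hx : x.den ≠ 1) : Int.fract x ≠ 0 := by
  rintro h
  obtain ⟨n, rfl⟩ := Int.fract_eq_zero_iff.mp h
  exact hx (Rat.den_intCast n)

theorem saw_add_intCast (x : ℚ) (n : ℤ) : saw (x + n) = saw x := by
  by_cases hx : x.den = 1
  · simp [saw, hx]
  · have hxn : (x + n).den ≠ 1 := by simpa using hx
    rw [saw_eq_fract_sub hx, saw_eq_fract_sub hxn, Int.fract_add_intCast]

theorem saw_neg (x : ℚ) : saw (-x) = -saw x := by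
  by_cases hx : x.den = 1
  · simp [saw, hx]
  · have hnx : (-x).den ≠ 1 := by simpa using hx
    rw [saw_eq_fract_sub hx, saw_eq_fract_sub hnx, Int.fract_neg (fract_ne_zero_of_den_ne_one hx)]
    ring

theorem saw_intCast_div {a p : ℤ} (hp : 0 < p) (h : ¬ p ∣ a) :
    saw (a / p) = a / p - (a / p : ℤ) - 1 / 2 := by
  have hden : ((a : ℚ) / p).den ≠ 1 := by
    rwa [Ne, Rat.den_div_intCast_eq_one_iff _ _ hp.ne']
  lift p to ℕ using hp.le
  rw [saw, if_neg hden]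
  push_cast
  rw [Rat.floor_intCast_div_natCast]

theorem sum_saw_mul_div_eq_zero (q p : ℤ) : ∑ i ∈ Ico 1 p, saw (i * q / p) = 0 := by
  have hreflect :
      ∑ i ∈ Ico 1 p, saw (i * q / p) = ∑ i ∈ Ico 1 p, saw ((p - i : ℤ) * q / p) :=
    sum_nbij' (fun i => p - i) (fun i => p - i)
      (fun i hi => by simp only [mem_Ico] at hi ⊢; omega)
      (fun i hi => by simp only [mem_Ico] at hi ⊢; omega) (by simp) (by simp) (by simp)
  have hsaw : ∀ i ∈ Ico 1 p, saw ((p - i : ℤ) * q / p) = -saw (i * q / p) := by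
    intro i hi
    have hp : (p : ℚ) ≠ 0 := by
      have := mem_Ico.mp hi
      exact_mod_cast (show p ≠ 0 by omega)
    rw [← saw_neg, ← saw_add_intCast _ (-q)]
    congr 1
    push_cast
    field_simp
    ring
  rw [sum_congr rfl hsaw, sum_neg_distrib] at hreflect
  linarith

theorem dedekindSum_add_mul_right (q k p : ℤ) : dedekindSum (q + k * p) p = dedekindSum q p := by
  refine sum_congr rfl fun i hi => ?_
  have hp : (p : ℚ) ≠ 0 := by
    have := mem_Ico.mp hi
    exact_mod_cast (show p ≠ 0 by omega)
  have : (i : ℚ) * ↑(q + k * p) / p = i * q / p + (i * k : ℤ) := by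
    push_cast
    field_simp
  rw [this, saw_add_intCast]

theorem dedekindSum_neg_left (q p : ℤ) : dedekindSum (-q) p = -dedekindSum q p := by
  simp only [dedekindSum, ← sum_neg_distrib, Int.cast_neg, mul_neg, neg_div, saw_neg]

theorem dedekindSum_one_right (q : ℤ) : dedekindSum q 1 = 0 := by
  simp [dedekindSum]

theorem not_dvd_mul_of_lt {p q i : ℤ} (hpq : IsCoprime p q) (hi : 0 < i) (hip : i < p) :
    ¬ p ∣ i * q := fun h => by
  have := Int.le_of_dvd hi (hpq.dvd_of_dvd_mul_right h)
  omega

theorem mul_emod_mem_Ico {p q i : ℤ} (hpq : IsCoprime p q) (hi : i ∈ Ico 1 p) :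
    i * q % p ∈ Ico 1 p := by
  obtain ⟨hi1, hip⟩ := mem_Ico.mp hi
  have hne : i * q % p ≠ 0 := fun h =>
    not_dvd_mul_of_lt hpq (by omega) hip (Int.dvd_of_emod_eq_zero h)
  have := Int.emod_nonneg (i * q) (by omega : p ≠ 0)
  have := Int.emod_lt_of_pos (i * q) (by omega : 0 < p)
  exact mem_Ico.mpr ⟨by omega, by omega⟩

theorem sum_Ico_mul_emod {M : Type*} [AddCommMonoid M] {p q : ℤ} (hpq : IsCoprime p q)
    (f : ℤ → M) : ∑ i ∈ Ico 1 p, f (i * q % p) = ∑ i ∈ Ico 1 p, f i := by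
  have hmaps : Set.MapsTo (fun i => i * q % p) (Ico 1 p : Set ℤ) (Ico 1 p) :=
    fun i hi => mul_emod_mem_Ico hpq hi
  have hinj : Set.InjOn (fun i => i * q % p) (Ico 1 p : Set ℤ) := by
    intro i hi j hj hij
    simp only [coe_Ico, Set.mem_Ico] at hi hj
    have hdvd : p ∣ j - i := hpq.dvd_of_dvd_mul_right <| by
      rw [sub_mul]; exact Int.ModEq.dvd hij
    have := Int.eq_zero_of_abs_lt_dvd hdvd (abs_lt.mpr ⟨by omega, by omega⟩)
    omega
  exact sum_nbij _ (fun i hi => hmaps hi) hinj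
    (surjOn_of_injOn_of_card_le _ hmaps hinj le_rfl) fun _ _ => rfl

theorem saw_mul_div {p q i : ℤ} (hpq : IsCoprime p q) (hi : i ∈ Ico 1 p) :
    saw (i * q / p) = i * q / p - (i * q / p : ℤ) - 1 / 2 := by
  obtain ⟨hi1, hip⟩ := mem_Ico.mp hi
  have := saw_intCast_div (by omega) (not_dvd_mul_of_lt hpq (by omega) hip)
  push_cast at this
  exact this

theorem saw_div_of_mem_Ico {p i : ℤ} (hi : i ∈ Ico 1 p) : saw (i / p) = i / p - 1 / 2 := by
  obtain ⟨hi1, hip⟩ := mem_Ico.mp hi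
  rw [saw_intCast_div (by omega) fun h => by have := Int.le_of_dvd (by omega) h; omega,
    Int.ediv_eq_zero_of_lt (by omega) hip]
  simp

theorem two_mul_sum_Ico_ediv {p q : ℤ} (hp : 0 < p) (hpq : IsCoprime p q) :
    2 * ∑ i ∈ Ico 1 p, i * q / p = (p - 1) * (q - 1) := by
  have h := sum_saw_mul_div_eq_zero q p
  rw [sum_congr rfl fun i hi => saw_mul_div hpq hi] at h
  simp only [sum_sub_distrib, ← sum_div, ← sum_mul, sum_const, nsmul_eq_mul] at h
  have hcard : ((#(Ico 1 p) : ℕ) : ℚ) = p - 1 := by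
    exact_mod_cast Int.card_Ico_of_le 1 p (by omega)
  have hp0 : (p : ℚ) ≠ 0 := by exact_mod_cast hp.ne'
  rw [hcard] at h
  field_simp at h
  have key : (p : ℚ) * (2 * ∑ i ∈ Ico 1 p, ((i * q / p : ℤ) : ℚ))
      = p * ((p - 1) * (q - 1)) := by
    linear_combination -h + q * two_mul_sum_Ico_intCast (R := ℚ) hp
  exact_mod_cast mul_left_cancel₀ hp0 key

noncomputable def weightedFloorSum (q p : ℤ) : ℤ := ∑ i ∈ Ico 1 p, i * (i * q / p)

theorem dedekindSum_eq_weightedFloorSum {p q : ℤ} (hp : 0 < p) (hpq : IsCoprime p q) :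
    12 * p * dedekindSum q p
      = 2 * q * (p - 1) * (2 * p - 1) - 12 * weightedFloorSum q p - 3 * p * (p - 1) := by
  have hp0 : (p : ℚ) ≠ 0 := by exact_mod_cast hp.ne'
  have hterm : ∀ i ∈ Ico 1 p, 12 * p * (saw (i / p) * saw (i * q / p))
      = 12 * q / p * (i : ℚ) ^ 2 - 12 * ((i * (i * q / p) : ℤ) : ℚ) - 6 * i
        - 6 * p * saw (i * q / p) := by
    intro i hi
    rw [saw_div_of_mem_Ico hi, saw_mul_div hpq hi]
    push_cast
    field_simp
    ring
  rw [dedekindSum, mul_sum, sum_congr rfl hterm]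
  simp only [sum_sub_distrib, ← mul_sum, sum_saw_mul_div_eq_zero, weightedFloorSum,
    Int.cast_sum]
  field_simp
  linear_combination 2 * q * six_mul_sum_Ico_intCast_sq (R := ℚ) hp
    - 3 * p * two_mul_sum_Ico_intCast (R := ℚ) hp

theorem sum_Ico_ediv_sq {p q : ℤ} (hp : 0 < p) (hq : 0 < q) (hpq : IsCoprime p q) :
    ∑ i ∈ Ico 1 p, (i * q / p) ^ 2 = ∑ j ∈ Ico 1 q, (2 * j - 1) * (p - 1 - j * p / q) := by
  have hsq : ∀ i ∈ Ico 1 p, (i * q / p) ^ 2 = ∑ j ∈ Ico 1 (i * q / p + 1), (2 * j - 1) :=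
    fun i hi => (sum_Ico_two_mul_sub_one
      (Int.ediv_nonneg (by nlinarith [(mem_Ico.mp hi).1]) hp.le)).symm
  rw [sum_congr rfl hsq, sum_comm' (t' := Ico 1 q) (s' := fun j => Ico (j * p / q + 1) p)]
  · refine sum_congr rfl fun j hj => ?_
    obtain ⟨hj1, hjq⟩ := mem_Ico.mp hj
    have hlt : j * p / q < p := (Int.ediv_lt_iff_lt_mul hq).mpr (by nlinarith)
    rw [sum_const, nsmul_eq_mul, Int.card_Ico_of_le _ _ (by omega)]
    ring
  · intro i j
    simp only [mem_Ico, Int.lt_add_one_iff, Int.le_ediv_iff_mul_le hp, Int.add_one_le_iff,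
      Int.ediv_lt_iff_lt_mul hq]
    constructor
    · rintro ⟨⟨hi1, hip⟩, hj1, hji⟩
      have hne : j * p ≠ i * q := fun h =>
        not_dvd_mul_of_lt hpq (by omega) hip ⟨j, by rw [← h]; ring⟩
      exact ⟨⟨lt_of_le_of_ne hji hne, hip⟩, hj1, by nlinarith⟩
    · rintro ⟨⟨hji, hip⟩, hj1, hjq⟩
      exact ⟨⟨by nlinarith, hip⟩, hj1, hji.le⟩

theorem weightedFloorSum_reciprocity {p q : ℤ} (hp : 0 < p) (hq : 0 < q) (hpq : IsCoprime p q) :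
    12 * q * weightedFloorSum q p + 12 * p * weightedFloorSum p q
      = 6 * p * (p - 1) * (q - 1) ^ 2 + 3 * p * (p - 1) * (q - 1)
        + (q ^ 2 - 1) * (p - 1) * (2 * p - 1) := by
  have hperm : q ^ 2 * ∑ i ∈ Ico 1 p, i ^ 2 - 2 * p * q * weightedFloorSum q p
      + p ^ 2 * ∑ i ∈ Ico 1 p, (i * q / p) ^ 2 = ∑ i ∈ Ico 1 p, i ^ 2 := by
    refine Eq.trans ?_ (sum_Ico_mul_emod hpq (· ^ 2))
    rw [weightedFloorSum, mul_sum, mul_sum, mul_sum, ← sum_sub_distrib, ← sum_add_distrib]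
    exact sum_congr rfl fun i _ => by rw [Int.emod_def]; ring
  have hcount : ∑ i ∈ Ico 1 p, (i * q / p) ^ 2
      = (p - 1) * ∑ j ∈ Ico 1 q, (2 * j - 1) - 2 * weightedFloorSum p q
        + ∑ j ∈ Ico 1 q, j * p / q := by
    rw [sum_Ico_ediv_sq hp hq hpq, weightedFloorSum, mul_sum, mul_sum, ← sum_sub_distrib,
      ← sum_add_distrib]
    exact sum_congr rfl fun j _ => by ring
  have hsq := six_mul_sum_Ico_intCast_sq (R := ℤ) hp
  simp only [Int.cast_id] at hsq
  have hodd := sum_Ico_two_mul_sub_one (m := q - 1) (by omega)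
  rw [sub_add_cancel] at hodd
  have hpq' : (p : ℤ) * (12 * q * weightedFloorSum q p + 12 * p * weightedFloorSum p q)
      = p * (6 * p * (p - 1) * (q - 1) ^ 2 + 3 * p * (p - 1) * (q - 1)
        + (q ^ 2 - 1) * (p - 1) * (2 * p - 1)) := by
    linear_combination (-6) * hperm + 6 * p ^ 2 * hcount
      + (q ^ 2 - 1) * hsq + 6 * p ^ 2 * (p - 1) * hodd
      + 3 * p ^ 2 * two_mul_sum_Ico_ediv hq hpq.symm
  exact mul_left_cancel₀ hp.ne' hpq'

theorem dedekindSum_reciprocity {p q : ℤ} (hp : 0 < p) (hq : 0 < q) (hpq : IsCoprime p q) :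
    12 * p * q * (dedekindSum q p + dedekindSum p q) = p ^ 2 + q ^ 2 + 1 - 3 * p * q := by
  have hU := congrArg (Int.cast : ℤ → ℚ) (weightedFloorSum_reciprocity hp hq hpq)
  push_cast at hU
  linear_combination q * dedekindSum_eq_weightedFloorSum hp hpq
    + p * dedekindSum_eq_weightedFloorSum hq hpq.symm
    - hU

theorem twelve_mul_dedekindSum_one_left {p : ℤ} (hp : 0 < p) :
    12 * dedekindSum 1 p = p - 3 + 2 / p := by
  have h := dedekindSum_reciprocity hp one_pos isCoprime_one_right
  rw [dedekindSum_one_right] at h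
  have hp0 : (p : ℚ) ≠ 0 := by exact_mod_cast hp.ne'
  field_simp
  push_cast at h
  linear_combination h

theorem twelve_mul_dedekindSum_sub_eq {p q qs qs' : ℤ} (a₁ : ℤ) (hp : 0 < p) (hq : 0 < q)
    (hpq : IsCoprime p q) (hqs' : p * qs' = q * qs - 1) :
    12 * dedekindSum q p - (q + qs) / p
      = a₁ - 3 + (12 * dedekindSum (a₁ * q - p) q - ((a₁ * q - p : ℤ) + qs') / q) := by
  have hflip : dedekindSum (a₁ * q - p) q = -dedekindSum p q := by
    rw [show a₁ * q - p = -p + a₁ * q by ring, dedekindSum_add_mul_right, dedekindSum_neg_left]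
  have hqs'Q : (p : ℚ) * qs' = q * qs - 1 := by exact_mod_cast hqs'
  have hp0 : (p : ℚ) ≠ 0 := by exact_mod_cast hp.ne'
  have hq0 : (q : ℚ) ≠ 0 := by exact_mod_cast hq.ne'
  rw [hflip]
  field_simp
  push_cast
  linear_combination dedekindSum_reciprocity hp hq hpq + hqs'Q

theorem one_lt_hjCF {l : List ℚ} (hl : l ≠ []) (h2 : ∀ x ∈ l, 2 ≤ x) : 1 < hjCF l := by
  induction l using hjCF.induct with
  | case1 => exact absurd rfl hl
  | case2 a => simp only [hjCF]; linarith [h2 a (by simp)]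
  | case3 a b l ih =>
    have hb : 1 < hjCF (b :: l) := ih (by simp) fun x hx => h2 x (List.mem_cons_of_mem _ hx)
    have ha : 2 ≤ a := h2 a (by simp)
    have : 1 / hjCF (b :: l) < 1 := (div_lt_one (by linarith)).mpr hb
    simp only [hjCF]
    linarith

theorem hjCF_cons_eq_div {a₁ p q : ℤ} {l : List ℚ} (hq : 0 < q) (hl : l ≠ [])
    (h2 : ∀ x ∈ l, 2 ≤ x) (h : hjCF (a₁ :: l) = p / q) :
    hjCF l = q / (a₁ * q - p : ℤ) ∧ 0 < a₁ * q - p ∧ a₁ * q - p < q := by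
  obtain ⟨b, l, rfl⟩ := List.exists_cons_of_ne_nil hl
  have hgt := one_lt_hjCF hl h2
  have hq0 : (0 : ℚ) < q := by exact_mod_cast hq
  have hr : ((a₁ * q - p : ℤ) : ℚ) = q / hjCF (b :: l) := by
    have : hjCF (b :: l) ≠ 0 := by positivity
    rw [hjCF, eq_div_iff hq0.ne'] at h
    field_simp at h ⊢
    push_cast
    linear_combination h
  refine ⟨by rw [hr, div_div_cancel₀ hq0.ne'], ?_, ?_⟩
  · exact_mod_cast hr ▸ div_pos hq0 (by linarith)
  · exact_mod_cast hr ▸ div_lt_self hq0 hgt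

theorem eq_one_of_intCast_eq_div {a p q : ℤ} (hq : 0 < q) (hpq : IsCoprime p q)
    (h : (a : ℚ) = p / q) : q = 1 ∧ p = a := by
  have hq0 : (q : ℚ) ≠ 0 := by exact_mod_cast hq.ne'
  have hp : p = a * q := by
    rw [eq_div_iff hq0] at h
    exact_mod_cast h.symm
  have hq1 : q = 1 := by
    rcases Int.isUnit_iff.mp (hpq.isUnit_of_dvd' ⟨a, by rw [hp, mul_comm]⟩ dvd_rfl) with h | h
    · exact h
    · omega
  exact ⟨hq1, by rw [hp, hq1, mul_one]⟩

theorem exists_modEq_inv_of_modEq_neg {p q qs q' : ℤ} (hq : 1 < q) (hqs : 0 < qs)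
    (hqsp : qs < p) (hinv : q * qs ≡ 1 [ZMOD p]) (hq' : q' ≡ -p [ZMOD q]) :
    ∃ qs', p * qs' = q * qs - 1 ∧ 0 < qs' ∧ qs' < q ∧ q' * qs' ≡ 1 [ZMOD q] := by
  obtain ⟨qs', h⟩ := hinv.symm.dvd
  refine ⟨qs', h.symm, by nlinarith, by nlinarith, ?_⟩
  calc q' * qs' ≡ -p * qs' [ZMOD q] := hq'.mul_right _
    _ = 1 - q * qs := by linear_combination h
    _ ≡ 1 [ZMOD q] := Int.modEq_iff_dvd.mpr ⟨qs, by ring⟩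

theorem twelve_mul_dedekindSum_of_intCast_eq_div {a₁ p q qs : ℤ} (hq : 0 < q) (hqp : q < p)
    (hpq : IsCoprime p q) (hqs : 0 < qs) (hqsp : qs < p) (hinv : q * qs ≡ 1 [ZMOD p])
    (h : (a₁ : ℚ) = p / q) :
    12 * dedekindSum q p = a₁ - 3 + (q + qs) / p := by
  obtain ⟨rfl, rfl⟩ := eq_one_of_intCast_eq_div hq hpq h
  obtain rfl : qs = 1 := by
    rw [one_mul] at hinv
    rwa [Int.ModEq, Int.emod_eq_of_lt hqs.le hqsp, Int.emod_eq_of_lt zero_le_one hqp] at hinv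
  rw [twelve_mul_dedekindSum_one_left (hq.trans hqp)]
  push_cast
  ring

/-- Hirzebruch–Zagier identity: `12 s(q,p) = Σ_j (a_j - 3) + (q + q*)/p`. -/
theorem hirzebruch_zagier (p q qs : ℤ) (hq : 0 < q) (hqp : q < p)
    (hcop : Int.gcd p q = 1) (hqs : 0 < qs) (hqsp : qs < p)
    (hinv : q * qs ≡ 1 [ZMOD p])
    (a : List ℤ) (ha : ∀ x ∈ a, 2 ≤ x)
    (hhj : hjCF (a.map fun x => (x : ℚ)) = (p : ℚ) / q) :
    12 * dedekindSum q p = (a.map fun x => (x : ℚ) - 3).sum + ((q : ℚ) + qs) / p := by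
  -- `a.map fun x => (x : ℚ)` elaborates through the list monad's coercion `List ℤ → List ℚ`
  simp only [List.pure_def, List.bind_eq_flatMap, List.map_id_fun', id_eq,
    ← List.map_eq_flatMap] at hhj ⊢
  rw [← Int.isCoprime_iff_gcd_eq_one] at hcop
  induction a generalizing p q qs with
  | nil =>
    have : (0 : ℚ) < p / q := div_pos (by exact_mod_cast hq.trans hqp) (by exact_mod_cast hq)
    rw [List.map_nil, hjCF] at hhj
    linarith
  | cons a₁ t ih =>
    rcases t with _ | ⟨b, t⟩
    · rw [List.map_singleton, hjCF] at hhj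
      simpa using twelve_mul_dedekindSum_of_intCast_eq_div hq hqp hcop hqs hqsp hinv hhj
    · have htail := fun x hx => ha x (List.mem_cons_of_mem a₁ (l := b :: t) hx)
      rw [List.map_cons] at hhj
      obtain ⟨hhj', hq'pos, hq'lt⟩ := hjCF_cons_eq_div hq (by simp)
        (List.forall_mem_map.mpr fun x hx => by exact_mod_cast htail x hx) hhj
      obtain ⟨qs', hqs', hqs'pos, hqs'lt, hinv'⟩ := exists_modEq_inv_of_modEq_neg
        (q' := a₁ * q - p) (by omega) hqs hqsp hinv (Int.modEq_iff_dvd.mpr ⟨-a₁, by ring⟩)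
      have hcop' : IsCoprime q (a₁ * q - p) := by
        simpa [sub_eq_neg_add, mul_comm] using hcop.symm.neg_right.add_mul_left_right a₁
      have hIH := ih q (a₁ * q - p) qs' hq'pos hq'lt hcop' hqs'pos hqs'lt hinv' htail hhj'
      rw [List.map_cons, List.map_cons, List.sum_cons]
      linear_combination twelve_mul_dedekindSum_sub_eq a₁ (hq.trans hqp) hq hcop hqs' + hIH
end

section
/- Let Γ be a finite connected tree with weights a_v such that the intersection matrix Q_Γ is negative definite. Set z_v = a_v - 2, fix a root, and define leaf-to-root: α_v = 1/(a_v - Σ_{c∈C(v)} α_c), s_v = z_v - Σ_{c∈C(v)} β_c, β_v = -α_v s_v. Then for the vector z = (z_v), z^T Q_Γ^{-1} z = -Σ_{v∈V(Γ)} α_v s_v^2. -/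
open scoped Matrix
open scoped Classical

noncomputable def xAux {V : Type*} [DecidableEq V] (ρ : V) (par : V → V)
    (α s : V → ℚ) : ℕ → V → ℚ
  | 0, v => α v * s v
  | n+1, v => α v * (s v + if v = ρ then 0 else xAux ρ par α s n (par v))

noncomputable def yAux {V : Type*} [DecidableEq V] (v0 : V) (par : V → V)
    (α : V → ℚ) : ℕ → V → ℚ
  | 0, u => if u = v0 then 1 else 0
  | n+1, u => if u = v0 then 1 else α u * yAux v0 par α n (par u)

/-- Leaf-to-root recursion for the quadratic form: for a negative-definite
plumbing tree with weights `a_v`, setting `z_v = a_v - 2` and defining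
`α, s, β` by the leaf-to-root recursions, one has
`zᵀ Q_Γ⁻¹ z = -Σ_v α_v s_v²`. -/
theorem quadratic_form_leaf_to_root {V : Type*} [Fintype V] [DecidableEq V]
    (ρ : V) (par : V → V) (depth : V → ℕ)
    (hroot : par ρ = ρ) (hdepth : ∀ v, v ≠ ρ → depth (par v) + 1 = depth v)
    (a : V → ℤ)
    (Q : Matrix V V ℚ)
    (hQ : ∀ u v, Q u v =
      if u = v then -(a u : ℚ)
      else if (par u = v ∧ u ≠ ρ) ∨ (par v = u ∧ v ≠ ρ) then 1 else 0)
    (hneg : ∀ x : V → ℚ, x ≠ 0 → x ⬝ᵥ Q.mulVec x < 0)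
    (α s β : V → ℚ)
    (hα : ∀ v, α v =
      1 / ((a v : ℚ) - ∑ c ∈ Finset.univ.filter (fun c => par c = v ∧ c ≠ ρ), α c))
    (hs : ∀ v, s v =
      ((a v : ℚ) - 2) - ∑ c ∈ Finset.univ.filter (fun c => par c = v ∧ c ≠ ρ), β c)
    (hβ : ∀ v, β v = -(α v) * s v) :
    (fun v => (a v : ℚ) - 2) ⬝ᵥ Q⁻¹.mulVec (fun v => (a v : ℚ) - 2)
      = -∑ v : V, α v * s v ^ 2 := by
  -- children set
  set C : V → Finset V := fun v => Finset.univ.filter (fun c => par c = v ∧ c ≠ ρ) with hC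
  have hCv : ∀ v, Finset.univ.filter (fun c => par c = v ∧ c ≠ ρ) = C v := fun v => rfl
  have hα' : ∀ v, α v = 1 / ((a v : ℚ) - ∑ c ∈ C v, α c) := by
    intro v; rw [hα v, hCv]
  have hs' : ∀ v, s v = ((a v : ℚ) - 2) - ∑ c ∈ C v, β c := by
    intro v; rw [hs v, hCv]
  -- basic facts
  have hparne : ∀ v, v ≠ ρ → par v ≠ v := by
    intro v hv h
    have := hdepth v hv
    rw [h] at this; omega
  have hnocyc : ∀ u v, u ≠ ρ → v ≠ ρ → par u = v → par v = u → False := by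
    intro u v hu hv h1 h2
    have e1 := hdepth u hu
    have e2 := hdepth v hv
    rw [h1] at e1; rw [h2] at e2; omega
  -- the row formula
  have hrow : ∀ (w : V → ℚ) (v : V), Q.mulVec w v
      = -(a v : ℚ) * w v + (if v = ρ then 0 else w (par v)) + ∑ c ∈ C v, w c := by
    intro w v
    have key : ∀ u, Q v u * w u =
        (if u = v then -(a v : ℚ) * w v else 0)
        + (if v ≠ ρ ∧ u = par v then w u else 0)
        + (if par u = v ∧ u ≠ ρ then w u else 0) := by
      intro u
      rw [hQ]
      by_cases h1 : u = v
      · subst h1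
        have h2 : ¬(u ≠ ρ ∧ u = par u) := fun h => hparne u h.1 h.2.symm
        have h3 : ¬(par u = u ∧ u ≠ ρ) := fun h => hparne u h.2 h.1
        rw [if_pos rfl, if_pos rfl, if_neg h2, if_neg h3]
        ring
      · rw [if_neg (Ne.symm h1), if_neg h1]
        by_cases h2 : v ≠ ρ ∧ u = par v
        · have h3 : ¬(par u = v ∧ u ≠ ρ) := fun h => hnocyc u v h.2 h2.1 h.1 h2.2.symm
          have h4 : (par v = u ∧ v ≠ ρ) ∨ (par u = v ∧ u ≠ ρ) := Or.inl ⟨h2.2.symm, h2.1⟩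
          rw [if_pos h4, if_pos h2, if_neg h3]
          ring
        · by_cases h3 : par u = v ∧ u ≠ ρ
          · have h4 : (par v = u ∧ v ≠ ρ) ∨ (par u = v ∧ u ≠ ρ) := Or.inr h3
            rw [if_pos h4, if_neg h2, if_pos h3]
            ring
          · have h4 : ¬((par v = u ∧ v ≠ ρ) ∨ (par u = v ∧ u ≠ ρ)) := by
              rintro (⟨e, hv⟩ | h)
              · exact h2 ⟨hv, e.symm⟩
              · exact h3 h
            rw [if_neg h4, if_neg h2, if_neg h3]
            ring
    calc Q.mulVec w v = ∑ u, Q v u * w u := rfl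
      _ = ∑ u, ((if u = v then -(a v : ℚ) * w v else 0)
            + (if v ≠ ρ ∧ u = par v then w u else 0)
            + (if par u = v ∧ u ≠ ρ then w u else 0)) :=
          Finset.sum_congr rfl fun u _ => key u
      _ = -(a v : ℚ) * w v + (if v = ρ then 0 else w (par v)) + ∑ c ∈ C v, w c := by
          rw [Finset.sum_add_distrib, Finset.sum_add_distrib]
          congr 1
          · congr 1
            · simp
            · by_cases hv : v = ρ
              · simp [hv]
              · simp [hv]
          · rw [Finset.sum_filter]
  -- positivity of denominators
  have hdpos : ∀ v0 : V, 0 < ((a v0 : ℚ) - ∑ c ∈ C v0, α c) := by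
    intro v0
    set y : V → ℚ := fun u => yAux v0 par α (depth u) u with hy
    have hyv0 : y v0 = 1 := by
      simp only [hy]
      cases depth v0 <;> simp [yAux]
    have hyrec : ∀ u, u ≠ v0 → u ≠ ρ → y u = α u * y (par u) := by
      intro u h1 h2
      have ht := hdepth u h2
      simp only [hy]
      rw [← ht]
      simp [yAux, h1]
    have hyρ : ρ ≠ v0 → y ρ = 0 := by
      intro h
      have : ∀ n, yAux v0 par α n ρ = 0 := by
        intro n; induction n with
        | zero => simp [yAux, h]
        | succ n ih => simp [yAux, h, hroot, ih]
      exact this _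
    have hydepth : ∀ u, y u ≠ 0 → u = v0 ∨ depth v0 < depth u := by
      have H : ∀ n u, depth u = n → y u ≠ 0 → u = v0 ∨ depth v0 < depth u := by
        intro n
        induction n using Nat.strong_induction_on with
        | _ n ih =>
          intro u hn hu
          by_cases h1 : u = v0
          · exact Or.inl h1
          by_cases h2 : u = ρ
          · subst h2; exact absurd (hyρ h1) hu
          have hrec := hyrec u h1 h2
          have hy' : y (par u) ≠ 0 := by
            intro h0; rw [hrec, h0, mul_zero] at hu; exact hu rfl
          have hdp := hdepth u h2
          rcases ih (depth (par u)) (by omega) (par u) rfl hy' with h | h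
          · right; rw [h] at hdp; omega
          · right; omega
      exact fun u => H (depth u) u rfl
    have hchild : ∀ u, y u ≠ 0 → ∀ c ∈ C u, y c = α c * y u := by
      intro u hu c hc
      simp only [hC, Finset.mem_filter] at hc
      obtain ⟨-, hcp, hcρ⟩ := hc
      have hcv : c ≠ v0 := by
        intro h
        have hdc := hdepth c hcρ
        rw [hcp] at hdc
        rcases hydepth u hu with h' | h'
        · exact hparne c hcρ (hcp.trans (h'.trans h.symm))
        · rw [h] at hdc; omega
      rw [hyrec c hcv hcρ, hcp]
    have hrowy : ∀ u, y u ≠ 0 →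
        Q.mulVec y u = -(y u * ((a u : ℚ) - ∑ c ∈ C u, α c))
          + (if u = ρ then 0 else y (par u)) := by
      intro u hu
      rw [hrow]
      have : ∑ c ∈ C u, y c = (∑ c ∈ C u, α c) * y u := by
        rw [Finset.sum_mul]
        exact Finset.sum_congr rfl fun c hc => hchild u hu c hc
      rw [this]; ring
    have hrowv0 : Q.mulVec y v0 = -((a v0 : ℚ) - ∑ c ∈ C v0, α c) := by
      rw [hrowy v0 (by rw [hyv0]; norm_num)]
      have hP : (if v0 = ρ then (0:ℚ) else y (par v0)) = 0 := by
        by_cases h : v0 = ρ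
        · simp [h]
        · rw [if_neg h]
          by_contra h0
          rcases hydepth (par v0) h0 with he | he
          · exact hparne v0 h he
          · have := hdepth v0 h; omega
      rw [hP, hyv0]; ring
    have hrow0 : ∀ u, u ≠ v0 → y u ≠ 0 → Q.mulVec y u = 0 := by
      intro u h1 hu
      have h2 : u ≠ ρ := by
        intro h; subst h; exact hu (hyρ h1)
      have hrec := hyrec u h1 h2
      have hαu : α u ≠ 0 := by
        intro h0; rw [hrec, h0, zero_mul] at hu; exact hu rfl
      have hdu : ((a u : ℚ) - ∑ c ∈ C u, α c) ≠ 0 := by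
        intro h0; exact hαu (by rw [hα' u, h0, div_zero])
      have hαd : α u * ((a u : ℚ) - ∑ c ∈ C u, α c) = 1 := by
        rw [hα' u]; exact one_div_mul_cancel hdu
      rw [hrowy u hu, if_neg h2, hrec]
      calc -(α u * y (par u) * ((a u : ℚ) - ∑ c ∈ C u, α c)) + y (par u)
          = -((α u * ((a u : ℚ) - ∑ c ∈ C u, α c)) * y (par u)) + y (par u) := by ring
        _ = 0 := by rw [hαd]; ring
    have hsum : y ⬝ᵥ Q.mulVec y = -((a v0 : ℚ) - ∑ c ∈ C v0, α c) := by
      have : ∀ u, y u * Q.mulVec y u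
          = if u = v0 then -((a v0 : ℚ) - ∑ c ∈ C v0, α c) else 0 := by
        intro u
        by_cases h1 : u = v0
        · subst h1; rw [if_pos rfl, hrowv0, hyv0, one_mul]
        · rw [if_neg h1]
          by_cases h2 : y u = 0
          · rw [h2, zero_mul]
          · rw [hrow0 u h1 h2, mul_zero]
      calc y ⬝ᵥ Q.mulVec y = ∑ u, y u * Q.mulVec y u := rfl
        _ = ∑ u, if u = v0 then -((a v0 : ℚ) - ∑ c ∈ C v0, α c) else 0 :=
            Finset.sum_congr rfl fun u _ => this u
        _ = -((a v0 : ℚ) - ∑ c ∈ C v0, α c) := by simp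
    have hyne : y ≠ 0 := by
      intro h; rw [h] at hyv0; simp at hyv0
    have := hneg y hyne
    rw [hsum] at this
    linarith
  have hdne : ∀ v, ((a v : ℚ) - ∑ c ∈ C v, α c) ≠ 0 := fun v => ne_of_gt (hdpos v)
  have hαd : ∀ v, α v * ((a v : ℚ) - ∑ c ∈ C v, α c) = 1 := by
    intro v
    rw [hα' v]; exact one_div_mul_cancel (hdne v)
  -- the solution vector
  set x : V → ℚ := fun v => xAux ρ par α s (depth v) v with hx
  have hxρ : x ρ = α ρ * s ρ := by
    have : ∀ n, xAux ρ par α s n ρ = α ρ * s ρ := by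
      intro n; cases n <;> simp [xAux]
    simp only [hx]; exact this _
  have hxrec : ∀ v, v ≠ ρ → x v = α v * (s v + x (par v)) := by
    intro v hv
    have ht := hdepth v hv
    simp only [hx]
    rw [← ht]
    simp [xAux, hv]
  have hxval : ∀ v, x v = α v * (s v + (if v = ρ then 0 else x (par v))) := by
    intro v
    by_cases h : v = ρ
    · subst h; rw [if_pos rfl, add_zero]; exact hxρ
    · rw [if_neg h]; exact hxrec v h
  have hQx : Q.mulVec x = fun v => -((a v : ℚ) - 2) := by
    funext v
    rw [hrow]
    have hsumC : ∑ c ∈ C v, x c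
        = (∑ c ∈ C v, -β c) + (∑ c ∈ C v, α c) * x v := by
      rw [Finset.sum_mul, ← Finset.sum_add_distrib]
      refine Finset.sum_congr rfl fun c hc => ?_
      simp only [hC, Finset.mem_filter] at hc
      obtain ⟨-, hcp, hcρ⟩ := hc
      rw [hxrec c hcρ, hcp]
      linear_combination hβ c
    rw [hsumC]
    have e1 := hxval v
    have e2 := hαd v
    have e3 := hs' v
    set P := if v = ρ then (0:ℚ) else x (par v)
    set A := ∑ c ∈ C v, α c
    set B := ∑ c ∈ C v, β c
    have hBneg : ∑ c ∈ C v, -β c = -B := by simp [B, Finset.sum_neg_distrib]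
    rw [hBneg]
    linear_combination (A - (a v : ℚ)) * e1 - (s v + P) * e2 - e3
  -- invertibility
  have hinj : Function.Injective Q.mulVec := by
    intro u v h
    by_contra hne
    have h0 : Q.mulVec (u - v) = 0 := by
      rw [Matrix.mulVec_sub, h, sub_self]
    have hne' : u - v ≠ 0 := sub_ne_zero_of_ne hne
    have := hneg (u - v) hne'
    rw [h0] at this
    simp at this
  have hdet : IsUnit Q.det := (Matrix.isUnit_iff_isUnit_det Q).mp
    (Matrix.mulVec_injective_iff_isUnit.mp hinj)
  have hQinv : Q⁻¹.mulVec (fun v => (a v : ℚ) - 2) = -x := by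
    have h1 : (fun v => (a v : ℚ) - 2) = Q.mulVec (-x) := by
      rw [Matrix.mulVec_neg, hQx]
      funext v; simp
    rw [h1, Matrix.mulVec_mulVec, Matrix.nonsing_inv_mul Q hdet, Matrix.one_mulVec]
  rw [hQinv]
  -- the final sum identity
  have hkey : ∑ v, ((a v : ℚ) - 2) * x v = ∑ v, α v * s v ^ 2 := by
    have hz : ∀ v, ((a v : ℚ) - 2) = s v + ∑ c ∈ C v, β c := by
      intro v; have := hs' v; linarith
    calc ∑ v, ((a v : ℚ) - 2) * x v
        = ∑ v, (s v * x v + ∑ c ∈ C v, β c * x (par c)) := by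
          refine Finset.sum_congr rfl fun v _ => ?_
          rw [hz v]
          rw [add_mul, Finset.sum_mul]
          congr 1
          refine Finset.sum_congr rfl fun c hc => ?_
          simp only [hC, Finset.mem_filter] at hc
          rw [hc.2.1]
      _ = ∑ v, s v * x v + ∑ c ∈ Finset.univ.filter (fun c => c ≠ ρ), β c * x (par c) := by
          rw [Finset.sum_add_distrib]
          congr 1
          rw [← Finset.sum_fiberwise_of_maps_to (t := Finset.univ) (g := par)
            (fun i _ => Finset.mem_univ _) (fun c => β c * x (par c))]
          refine Finset.sum_congr rfl fun v _ => ?_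
          refine Finset.sum_congr ?_ fun c _ => rfl
          rw [hC, Finset.filter_filter]
          exact Finset.filter_congr fun c _ => by tauto
      _ = ∑ v, s v * x v + ∑ c ∈ Finset.univ.filter (fun c => c ≠ ρ),
            (α c * s c ^ 2 - s c * x c) := by
          congr 1
          refine Finset.sum_congr rfl fun c hc => ?_
          simp only [Finset.mem_filter] at hc
          have e1 := hxrec c hc.2
          linear_combination x (par c) * hβ c + s c * e1
      _ = ∑ v, α v * s v ^ 2 := by
          rw [Finset.sum_sub_distrib, Finset.filter_ne']
          have h1 : ∑ c ∈ Finset.univ.erase ρ, s c * x c + s ρ * x ρ = ∑ v, s v * x v :=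
            Finset.sum_erase_add _ _ (Finset.mem_univ ρ)
          have h2 : ∑ c ∈ Finset.univ.erase ρ, α c * s c ^ 2 + α ρ * s ρ ^ 2
              = ∑ v, α v * s v ^ 2 :=
            Finset.sum_erase_add _ _ (Finset.mem_univ ρ)
          have h3 : s ρ * x ρ = α ρ * s ρ ^ 2 := by rw [hxρ]; ring
          linarith
  calc (fun v => (a v : ℚ) - 2) ⬝ᵥ (-x) = ∑ v, ((a v : ℚ) - 2) * (-x v) := rfl
    _ = -∑ v, ((a v : ℚ) - 2) * x v := by
        rw [← Finset.sum_neg_distrib]; exact Finset.sum_congr rfl fun v _ => by ring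
    _ = -∑ v : V, α v * s v ^ 2 := by rw [hkey]
end

section
/- Let Γ be a finite connected tree with weights a_v whose intersection matrix Q_Γ is negative definite, rooted at ρ. If v has children c_1,...,c_s with rooted subtree matrices Q_{c_1},...,Q_{c_s}, then β_v := (Q_v^{-1} z_v)_v satisfies β_v = -α_v (z_v - Σ_{i=1}^s β_{c_i}), where α_v = -(Q_v^{-1})_{vv} and z is the vector with entries z_u = a_u - 2 restricted to the subtree at v. -/
/-!
Let `X` be `Q_v⁻¹ z_v` extended by zero. For a child `c` of `v`, the rows of `Q_v` indexed by the
subtree at `c` meet the rest of that subtree only in the entry `(c, v) = 1`, so the restriction of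
`X` solves `Q_c x = z_c - X_v e_c` and `X_c = β_c + α_c X_v`. The row of `v` then reads
`z_v = -a_v X_v + Σ_c X_c`, i.e. `β_v (-a_v + Σ_c α_c) = z_v - Σ_c β_c`. The same identity for
the right-hand side `e_v` in place of `z` gives `-α_v (-a_v + Σ_c α_c) = 1`, and the recursion
follows.
Negative definiteness makes every principal submatrix `Q_v` invertible.
-/

open scoped Matrix
open scoped Classical

/-- `α_v = -(Q_v⁻¹)_{vv}`, where `Q_v` is the principal submatrix of `Q`
indexed by the rooted subtree at `v` (the descendants of `v` for `par`). -/
noncomputable def subAlpha {V : Type*} [Fintype V] [DecidableEq V]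
    (par : V → V) (Q : Matrix V V ℚ) (v : V) : ℚ :=
  -(((Q.submatrix (Subtype.val : {u : V // ∃ m, par^[m] u = v} → V) Subtype.val)⁻¹)
      (⟨v, ⟨0, rfl⟩⟩ : {u : V // ∃ m, par^[m] u = v})
      (⟨v, ⟨0, rfl⟩⟩ : {u : V // ∃ m, par^[m] u = v}))

/-- `β_v = (Q_v⁻¹ z_v)_v`, where `z_u = a_u - 2` restricted to the subtree at `v`. -/
noncomputable def subBeta {V : Type*} [Fintype V] [DecidableEq V]
    (par : V → V) (Q : Matrix V V ℚ) (a : V → ℤ) (v : V) : ℚ :=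
  (((Q.submatrix (Subtype.val : {u : V // ∃ m, par^[m] u = v} → V) Subtype.val)⁻¹).mulVec
      (fun u : {u : V // ∃ m, par^[m] u = v} => (a u.val : ℚ) - 2))
    (⟨v, ⟨0, rfl⟩⟩ : {u : V // ∃ m, par^[m] u = v})

open Finset Function

section ExtendByZero

variable {ι K : Type*} [Fintype ι] [Field K] {p : ι → Prop} [DecidablePred p]

lemma dotProduct_extend_val (y : ι → K) (x : Subtype p → K) :
    y ⬝ᵥ Subtype.val.extend x 0 = (fun j : Subtype p => y j) ⬝ᵥ x := by
  have hout (i : {i // ¬ p i}) : Subtype.val.extend x 0 i.1 = 0 := extend_val_apply' i.2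
  rw [dotProduct, ← Fintype.sum_subtype_add_sum_subtype p]
  simp [hout, dotProduct]

lemma mulVec_extend_val_apply (Q : Matrix ι ι K) (x : Subtype p → K) (i : Subtype p) :
    (Q *ᵥ Subtype.val.extend x 0) i = (Q.submatrix Subtype.val Subtype.val *ᵥ x) i :=
  dotProduct_extend_val _ x

omit [Fintype ι] [DecidablePred p] in
lemma extend_val_ne_zero {x : Subtype p → K} (hx : x ≠ 0) : Subtype.val.extend x 0 ≠ 0 := by
  contrapose! hx
  ext i
  simpa [extend_val_apply i.2] using congrFun hx i

variable [DecidableEq ι] {Q : Matrix ι ι K}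

lemma isUnit_det_submatrix_of_anisotropic
    (hQ : ∀ x : ι → K, x ≠ 0 → x ⬝ᵥ Q *ᵥ x ≠ 0) :
    IsUnit (Q.submatrix (Subtype.val : Subtype p → ι) Subtype.val).det := by
  rw [isUnit_iff_ne_zero]
  intro hdet
  obtain ⟨x, hx0, hx⟩ := Matrix.exists_mulVec_eq_zero_iff.mpr hdet
  apply hQ _ (extend_val_ne_zero hx0)
  rw [dotProduct_comm, dotProduct_extend_val]
  simp_rw [mulVec_extend_val_apply, hx]
  exact zero_dotProduct x

lemma mulVec_extend_val_inv_mulVec_apply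
    (hdet : IsUnit (Q.submatrix (Subtype.val : Subtype p → ι) Subtype.val).det)
    (b : ι → K) (i : Subtype p) :
    (Q *ᵥ Subtype.val.extend ((Q.submatrix (Subtype.val : Subtype p → ι) Subtype.val)⁻¹ *ᵥ
      fun j : Subtype p => b j) 0) i = b i := by
  rw [mulVec_extend_val_apply, Matrix.mulVec_mulVec, Matrix.mul_nonsing_inv _ hdet,
    Matrix.one_mulVec]

lemma inv_submatrix_mulVec_apply_eq
    (hdet : IsUnit (Q.submatrix (Subtype.val : Subtype p → ι) Subtype.val).det)
    {X b : ι → K} (hX : ∀ u, ¬ p u → X u = 0) (hb : ∀ i : Subtype p, (Q *ᵥ X) i = b i)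
    (i : Subtype p) :
    ((Q.submatrix (Subtype.val : Subtype p → ι) Subtype.val)⁻¹ *ᵥ fun j : Subtype p => b j) i
      = X i := by
  have hext : X = Subtype.val.extend (fun j : Subtype p => X j) 0 := by
    funext u
    by_cases hu : p u
    · rw [extend_val_apply hu]
    · rw [extend_val_apply' hu, hX u hu, Pi.zero_apply]
  have hsys : Q.submatrix Subtype.val Subtype.val *ᵥ (fun j : Subtype p => X j) =
      fun j : Subtype p => b j := by
    funext j
    rw [← mulVec_extend_val_apply, ← hext, hb]
  rw [← hsys, Matrix.mulVec_mulVec, Matrix.nonsing_inv_mul _ hdet, Matrix.one_mulVec]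

end ExtendByZero

section ParentMap

variable {V : Type*} {ρ : V} {par : V → V}

lemma iterate_eq_root_or_depth_add {depth : V → ℕ} (hroot : par ρ = ρ)
    (hdepth : ∀ v, v ≠ ρ → depth (par v) + 1 = depth v) (m : ℕ) (v : V) :
    par^[m] v = ρ ∨ depth (par^[m] v) + m = depth v := by
  induction m with
  | zero => simp
  | succ m ih =>
    rw [iterate_succ_apply']
    by_cases hm : par^[m] v = ρ
    · rw [hm, hroot]
      exact Or.inl rfl
    · have hstep := hdepth _ hm
      have hm' := ih.resolve_left hm
      exact Or.inr (by omega)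

lemma periodicPts_subset_of_depth {depth : V → ℕ} (hroot : par ρ = ρ)
    (hdepth : ∀ v, v ≠ ρ → depth (par v) + 1 = depth v) : periodicPts par ⊆ {ρ} := by
  rintro v ⟨n, hn, hv⟩
  rcases iterate_eq_root_or_depth_add hroot hdepth n v with h | h
  · rwa [hv.eq] at h
  · rw [hv.eq] at h
    omega

lemma iterate_apply_par_ne (hper : periodicPts par ⊆ {ρ}) {u : V} (hu : u ≠ ρ) (k : ℕ) :
    par^[k] (par u) ≠ u := fun h =>
  hu (hper ⟨k + 1, k.succ_pos, by rwa [IsPeriodicPt, IsFixedPt, iterate_succ_apply]⟩)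

lemma exists_iterate_eq_par {u c : V} (hu : ∃ m, par^[m] u = c) : ∃ m, par^[m] u = par c := by
  obtain ⟨m, rfl⟩ := hu
  exact ⟨m + 1, iterate_succ_apply' par m u⟩

lemma exists_iterate_eq_of_adj {u w c : V} (hu : ∃ m, par^[m] u = c)
    (hadj : par u = w ∨ par w = u) :
    (∃ m, par^[m] w = c) ∨ (u = c ∧ w = par c) := by
  obtain ⟨m, hm⟩ := hu
  rcases hadj with rfl | rfl
  · rcases m with _ | m
    · exact Or.inr ⟨hm, by rw [← hm]; rfl⟩
    · exact Or.inl ⟨m, by rwa [← iterate_succ_apply]⟩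
  · exact Or.inl ⟨m + 1, by rwa [iterate_succ_apply]⟩

end ParentMap

section PlumbingMatrix

variable {V : Type*} [DecidableEq V] {ρ : V} {par : V → V} {Q : Matrix V V ℚ}

def IsPlumbingMatrix (ρ : V) (par : V → V) (d : V → ℚ) (Q : Matrix V V ℚ) : Prop :=
  ∀ u w, Q u w =
    if u = w then d u else if (par u = w ∧ u ≠ ρ) ∨ (par w = u ∧ w ≠ ρ) then 1 else 0

variable {d : V → ℚ}

lemma IsPlumbingMatrix.apply_of_not_exists_iterate (hQ : IsPlumbingMatrix ρ par d Q) {c u w : V}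
    (hc : c ≠ ρ) (hu : ∃ m, par^[m] u = c) (hw : ¬ ∃ m, par^[m] w = c) :
    Q u w = if u = c ∧ w = par c then 1 else 0 := by
  have huw : u ≠ w := by
    rintro rfl
    exact hw hu
  rw [hQ, if_neg huw]
  by_cases h : u = c ∧ w = par c
  · obtain ⟨rfl, rfl⟩ := h
    simp [hc]
  · rw [if_neg h, if_neg]
    rintro (⟨hadj, -⟩ | ⟨hadj, -⟩)
    · have := exists_iterate_eq_of_adj hu (Or.inl hadj)
      tauto
    · have := exists_iterate_eq_of_adj hu (Or.inr hadj)
      tauto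

variable [Fintype V]

noncomputable def subSolve (par : V → V) (Q : Matrix V V ℚ) (b : V → ℚ) (v : V) : ℚ :=
  (((Q.submatrix (Subtype.val : {u : V // ∃ m, par^[m] u = v} → V) Subtype.val)⁻¹).mulVec
      (fun u : {u : V // ∃ m, par^[m] u = v} => b u.val))
    (⟨v, ⟨0, rfl⟩⟩ : {u : V // ∃ m, par^[m] u = v})

lemma subSolve_sub_smul (b : V → ℚ) (t : ℚ) (e : V → ℚ) (v : V) :
    subSolve par Q (b - t • e) v = subSolve par Q b v - t * subSolve par Q e v := by
  simp only [subSolve]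
  rw [show (fun u : {u : V // ∃ m, par^[m] u = v} => (b - t • e) u.val)
      = (fun u => b u.val) - t • (fun u => e u.val) from rfl, Matrix.mulVec_sub,
    Matrix.mulVec_smul]
  rfl

lemma subSolve_single_self (v : V) : subSolve par Q (Pi.single v 1) v = -subAlpha par Q v := by
  have hvec : (fun u : {u : V // ∃ m, par^[m] u = v} => (Pi.single v 1 : V → ℚ) u.val)
      = Pi.single ⟨v, 0, rfl⟩ 1 := by
    funext u
    simp only [Pi.single_apply, Subtype.ext_iff]
  rw [subSolve, subAlpha, hvec, Matrix.mulVec_single_one, neg_neg]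
  rfl

lemma subSolve_single_par_eq_zero (hper : periodicPts par ⊆ {ρ}) {c : V} (hc : c ≠ ρ) :
    subSolve par Q (Pi.single (par c) 1) c = 0 := by
  have hvec :
      (fun u : {u : V // ∃ m, par^[m] u = c} => (Pi.single (par c) 1 : V → ℚ) u.val) = 0 := by
    funext ⟨u, m, hm⟩
    refine Pi.single_eq_of_ne (fun h => iterate_apply_par_ne hper hc m ?_) 1
    rw [← h, hm]
  simp only [subSolve, hvec, Matrix.mulVec_zero, Pi.zero_apply]

lemma IsPlumbingMatrix.mulVec_restrict_apply (hper : periodicPts par ⊆ {ρ})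
    (hQ : IsPlumbingMatrix ρ par d Q) {c : V} (hc : c ≠ ρ) (X : V → ℚ) {u : V}
    (hu : ∃ m, par^[m] u = c) :
    (Q *ᵥ fun w => if ∃ m, par^[m] w = c then X w else 0) u
      = (Q *ᵥ X - X (par c) • (Pi.single c 1 : V → ℚ)) u := by
  have hterm (w : V) : Q u w * X w = Q u w * (if ∃ m, par^[m] w = c then X w else 0)
      + if w = par c then X (par c) * (Pi.single c 1 : V → ℚ) u else 0 := by
    by_cases hw : ∃ m, par^[m] w = c
    · have hwv : w ≠ par c := by
        rintro rfl
        exact iterate_apply_par_ne hper hc _ hw.choose_spec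
      simp [hw, hwv]
    · rw [hQ.apply_of_not_exists_iterate hc hu hw, if_neg hw, mul_zero, zero_add]
      by_cases hwv : w = par c
      · subst hwv
        by_cases huc : u = c <;> simp [huc]
      · simp [hwv]
  simp_rw [Pi.sub_apply, Pi.smul_apply, smul_eq_mul, Matrix.mulVec, dotProduct, hterm,
    sum_add_distrib, sum_ite_eq', mem_univ, if_true, add_sub_cancel_right]

lemma IsPlumbingMatrix.apply_eq_subSolve_add (hper : periodicPts par ⊆ {ρ})
    (hQ : IsPlumbingMatrix ρ par d Q)
    (hQ₀ : ∀ x : V → ℚ, x ≠ 0 → x ⬝ᵥ Q *ᵥ x ≠ 0)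
    {c : V} (hc : c ≠ ρ) {X b : V → ℚ}
    (hsys : ∀ u, (∃ m, par^[m] u = par c) → (Q *ᵥ X) u = b u) :
    X c = subSolve par Q b c + X (par c) * subAlpha par Q c := by
  have hsolve := inv_submatrix_mulVec_apply_eq (p := fun u => ∃ m, par^[m] u = c)
    (isUnit_det_submatrix_of_anisotropic hQ₀)
    (X := fun w => if ∃ m, par^[m] w = c then X w else 0) (b := b - X (par c) • Pi.single c 1)
    (fun u hu => if_neg hu)
    (fun i => by
      rw [hQ.mulVec_restrict_apply hper hc X i.2, Pi.sub_apply, Pi.sub_apply,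
        hsys _ (exists_iterate_eq_par i.2)])
    ⟨c, 0, rfl⟩
  change subSolve par Q (b - X (par c) • Pi.single c 1) c
    = if ∃ m, par^[m] c = c then X c else 0 at hsolve
  rw [if_pos ⟨0, rfl⟩, subSolve_sub_smul, subSolve_single_self] at hsolve
  linarith

lemma IsPlumbingMatrix.mulVec_apply_eq_add_sum_children (hper : periodicPts par ⊆ {ρ})
    (hQ : IsPlumbingMatrix ρ par d Q) {v : V} {X : V → ℚ}
    (hX : ∀ u, ¬ (∃ m, par^[m] u = v) → X u = 0) :
    (Q *ᵥ X) v = d v * X v + ∑ c ∈ univ.filter (fun c => par c = v ∧ c ≠ ρ), X c := by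
  have hterm (w : V) : Q v w * X w
      = (if v = w then d v * X v else 0) + if par w = v ∧ w ≠ ρ then X w else 0 := by
    by_cases hvw : v = w
    · subst hvw
      have : ¬ (par v = v ∧ v ≠ ρ) := fun h => iterate_apply_par_ne hper h.2 0 h.1
      simp [hQ v v, this]
    by_cases hch : par w = v ∧ w ≠ ρ
    · simp [hQ v w, hvw, hch]
    rw [if_neg hvw, if_neg hch, add_zero]
    by_cases hw : ∃ m, par^[m] w = v
    · rw [hQ, if_neg hvw, if_neg, zero_mul]
      rintro (⟨rfl, hv⟩ | h)
      · exact iterate_apply_par_ne hper hv _ hw.choose_spec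
      · exact hch h
    · rw [hX w hw, mul_zero]
  simp_rw [Matrix.mulVec, dotProduct, hterm, sum_add_distrib, sum_ite_eq, mem_univ, if_true,
    ← sum_filter]

lemma IsPlumbingMatrix.subSolve_mul_eq (hper : periodicPts par ⊆ {ρ})
    (hQ : IsPlumbingMatrix ρ par d Q)
    (hQ₀ : ∀ x : V → ℚ, x ≠ 0 → x ⬝ᵥ Q *ᵥ x ≠ 0)
    (b : V → ℚ) (v : V) :
    subSolve par Q b v
        * (d v + ∑ c ∈ univ.filter (fun c => par c = v ∧ c ≠ ρ), subAlpha par Q c)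
      = b v - ∑ c ∈ univ.filter (fun c => par c = v ∧ c ≠ ρ), subSolve par Q b c := by
  set X : V → ℚ := Subtype.val.extend
    ((Q.submatrix (Subtype.val : {u : V // ∃ m, par^[m] u = v} → V) Subtype.val)⁻¹ *ᵥ
      fun u : {u : V // ∃ m, par^[m] u = v} => b u) 0
  have hXv : X v = subSolve par Q b v := extend_val_apply ⟨0, rfl⟩
  have hsys (u : V) (hu : ∃ m, par^[m] u = v) : (Q *ᵥ X) u = b u :=
    mulVec_extend_val_inv_mulVec_apply (isUnit_det_submatrix_of_anisotropic hQ₀) b ⟨u, hu⟩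
  have hchild : ∀ c ∈ univ.filter (fun c => par c = v ∧ c ≠ ρ),
      X c = subSolve par Q b c + X v * subAlpha par Q c := by
    intro c hc
    obtain ⟨hcv, hcρ⟩ := (mem_filter.1 hc).2
    rw [← hcv] at hsys ⊢
    exact hQ.apply_eq_subSolve_add hper hQ₀ hcρ hsys
  have hrow := hQ.mulVec_apply_eq_add_sum_children hper (X := X)
    (fun _ hu => extend_val_apply' (p := fun u => ∃ m, par^[m] u = v) hu)
  rw [hsys v ⟨0, rfl⟩, sum_congr rfl hchild, sum_add_distrib, ← mul_sum, hXv] at hrow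
  linear_combination -hrow

end PlumbingMatrix

/-- The propagation recursion `β_v = -α_v (z_v - Σ_{c ∈ C(v)} β_c)` for a
negative-definite plumbing tree. -/
theorem beta_recursion {V : Type*} [Fintype V] [DecidableEq V]
    (ρ : V) (par : V → V) (depth : V → ℕ)
    (hroot : par ρ = ρ) (hdepth : ∀ v, v ≠ ρ → depth (par v) + 1 = depth v)
    (a : V → ℤ)
    (Q : Matrix V V ℚ)
    (hQ : ∀ u v, Q u v =
      if u = v then -(a u : ℚ)
      else if (par u = v ∧ u ≠ ρ) ∨ (par v = u ∧ v ≠ ρ) then 1 else 0)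
    (hneg : ∀ x : V → ℚ, x ≠ 0 → x ⬝ᵥ Q.mulVec x < 0) :
    ∀ v : V, subBeta par Q a v =
      -(subAlpha par Q v) * (((a v : ℚ) - 2)
        - ∑ c ∈ Finset.univ.filter (fun c => par c = v ∧ c ≠ ρ), subBeta par Q a c) := by
  intro v
  have hper := periodicPts_subset_of_depth hroot hdepth
  have hplumb : IsPlumbingMatrix ρ par (fun u => -(a u : ℚ)) Q := hQ
  have hQ₀ (x : V → ℚ) (hx : x ≠ 0) : x ⬝ᵥ Q *ᵥ x ≠ 0 := (hneg x hx).ne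
  have hβ := hplumb.subSolve_mul_eq hper hQ₀ (fun u => (a u : ℚ) - 2) v
  have hα := hplumb.subSolve_mul_eq hper hQ₀ (Pi.single v 1) v
  rw [subSolve_single_self, Pi.single_eq_same, sub_eq_self.2 (sum_eq_zero fun c hc => by
    obtain ⟨rfl, hcρ⟩ := (mem_filter.1 hc).2
    exact subSolve_single_par_eq_zero hper hcρ)] at hα
  change subBeta par Q a v * _ = _ - ∑ c ∈ _, subBeta par Q a c at hβ
  linear_combination (-subBeta par Q a v) * hα - subAlpha par Q v * hβ
end

section
/- Let M be a symmetric real n×n matrix with all entries strictly positive, and let c ∈ ℝ^n have all entries positive. Then for any z ∈ ℝ^n with |z_i| ≤ c_i for all i, one has z^T M z ≤ c^T M c, with equality if and only if z = c or z = -c. -/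
open scoped Matrix

/-- Quadratic maximization: if `M` is symmetric with strictly positive entries
and `c` has positive entries, then for any `z` with `|z_i| ≤ c_i`,
`zᵀ M z ≤ cᵀ M c`, with equality iff `z = c` or `z = -c`. -/
theorem quadratic_max {n : ℕ} (M : Matrix (Fin n) (Fin n) ℝ)
    (hsymm : M.IsSymm) (hM : ∀ i j, 0 < M i j)
    (c : Fin n → ℝ) (hc : ∀ i, 0 < c i)
    (z : Fin n → ℝ) (hz : ∀ i, |z i| ≤ c i) :
    z ⬝ᵥ M.mulVec z ≤ c ⬝ᵥ M.mulVec c ∧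
      (z ⬝ᵥ M.mulVec z = c ⬝ᵥ M.mulVec c ↔ z = c ∨ z = -c) := by
  have expand : ∀ w : Fin n → ℝ, w ⬝ᵥ M.mulVec w
      = ∑ p : Fin n × Fin n, w p.1 * M p.1 p.2 * w p.2 := by
    intro w
    rw [Fintype.sum_prod_type]
    simp [dotProduct, Matrix.mulVec, Finset.mul_sum, mul_assoc]
  have hzc : ∀ i j, z i * z j ≤ c i * c j := by
    intro i j
    calc z i * z j ≤ |z i * z j| := le_abs_self _
    _ = |z i| * |z j| := abs_mul _ _
    _ ≤ c i * c j :=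
      mul_le_mul (hz i) (hz j) (abs_nonneg _) ((abs_nonneg (z i)).trans (hz i))
  have hle : ∀ p : Fin n × Fin n,
      z p.1 * M p.1 p.2 * z p.2 ≤ c p.1 * M p.1 p.2 * c p.2 := by
    intro p
    have h := mul_le_mul_of_nonneg_left (hzc p.1 p.2) (hM p.1 p.2).le
    nlinarith [h]
  have hsum : z ⬝ᵥ M.mulVec z ≤ c ⬝ᵥ M.mulVec c := by
    rw [expand z, expand c]
    exact Finset.sum_le_sum fun p _ => hle p
  refine ⟨hsum, ?_, ?_⟩
  · intro heq
    rw [expand z, expand c] at heq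
    have hterm := (Finset.sum_eq_sum_iff_of_le (fun p _ => hle p)).mp heq
    have hprod : ∀ i j, z i * z j = c i * c j := by
      intro i j
      have h := hterm (i, j) (Finset.mem_univ _)
      have h2 : M i j * (z i * z j) = M i j * (c i * c j) := by
        dsimp at h; linear_combination h
      exact mul_left_cancel₀ (hM i j).ne' h2
    have habs : ∀ i, z i = c i ∨ z i = -c i := by
      intro i
      have h := hprod i i
      have h2 : (z i - c i) * (z i + c i) = 0 := by linear_combination h
      rcases mul_eq_zero.mp h2 with h3 | h3
      · left; linarith
      · right; linarith
    rcases Classical.em (∃ i, z i = c i) with ⟨i0, hi0⟩ | hno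
    · left; funext j
      have h := hprod i0 j
      rw [hi0] at h
      exact mul_left_cancel₀ (hc i0).ne' h
    · right; funext j
      rcases habs j with h | h
      · exact absurd ⟨j, h⟩ hno
      · simpa using h
  · rintro (rfl | rfl)
    · rfl
    · simp [Matrix.mulVec_neg, dotProduct_neg, neg_dotProduct]
end
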